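/- If two totally disjoint sequences of filters (F_n) and (G_k) have the same contour H, then H is also the contour of a common locally finite refinement: namely there exists a sequence (H_p) of filters and a finite-to-one map f : ω → ω such that F_n = ⋂_{f(p)=n} H_p for almost all n, and similarly a finite-to-one map for (G_k), and H is the contour of (H_p). -/
import Mathlib


open Filter

/-- The contour (set-theoretic lower limit) of a sequence of filters:
`A ∈ contourSeq F` iff `A ∈ F n` for all sufficiently large `n`. -/
def contourSeq {X : Type*} (F : ℕ → Filter X) : Filter X := Filter.atTop.bind F

/-- Two filters mesh (`#`) if every member of the first intersects every member of the second. -/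
def Mesh {X : Type*} (F G : Filter X) : Prop := ∀ A ∈ F, ∀ B ∈ G, (A ∩ B).Nonempty

/-- A sequence of filters is totally disjoint if there are pairwise disjoint sets `A n ∈ F n`. -/
def TotallyDisjoint {X : Type*} (F : ℕ → Filter X) : Prop :=
  ∃ A : ℕ → Set X, (∀ n, A n ∈ F n) ∧ Pairwise fun m n => Disjoint (A m) (A n)

open Set

lemma mesh_comm {X : Type*} {F G : Filter X} : Mesh F G ↔ Mesh G F := by
  constructor <;> exact fun h A hA B hB => by rw [Set.inter_comm]; exact h B hB A hA

lemma mem_contourSeq {X : Type*} {F : ℕ → Filter X} {A : Set X} :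
    A ∈ contourSeq F ↔ ∃ M, ∀ n ≥ M, A ∈ F n := by
  simp only [contourSeq, Filter.mem_bind]
  constructor
  · rintro ⟨t, ht, hmem⟩
    obtain ⟨M, hM⟩ := mem_atTop_sets.mp ht
    exact ⟨M, fun n hn => hmem n (hM n hn)⟩
  · rintro ⟨M, hM⟩
    exact ⟨Set.Ici M, Ici_mem_atTop M, fun n hn => hM n hn⟩

lemma meshFinite {X : Type*} (F G : ℕ → Filter X) (hF : TotallyDisjoint F)
    (h : contourSeq F = contourSeq G) (n : ℕ) : {k | Mesh (F n) (G k)}.Finite := by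
  obtain ⟨Xs, hXmem, hXdisj⟩ := hF
  have hc : (Xs n)ᶜ ∈ contourSeq F := mem_contourSeq.mpr ⟨n+1, fun m hm =>
    mem_of_superset (hXmem m) (subset_compl_iff_disjoint_right.mpr (hXdisj (by omega)))⟩
  rw [h] at hc
  obtain ⟨κ, hκ⟩ := mem_contourSeq.mp hc
  refine (finite_Iio κ).subset fun k hk => ?_
  simp only [mem_setOf_eq] at hk
  by_contra hge
  simp only [mem_Iio, not_lt] at hge
  obtain ⟨x, hx1, hx2⟩ := hk (Xs n) (hXmem n) ((Xs n)ᶜ) (hκ k hge)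
  exact hx2 hx1
lemma key_claim {X : Type*} (F G : ℕ → Filter X)
    (hF : TotallyDisjoint F) (hG : TotallyDisjoint G)
    (h : contourSeq F = contourSeq G) :
    {n | ¬ F n ≤ ⨆ k ∈ {k | Mesh (F n) (G k)}, F n ⊓ G k}.Finite := by
  classical
  obtain ⟨Xs, hXmem, hXdisj⟩ := hF
  obtain ⟨Ys, hYmem, hYdisj⟩ := hG
  have hXc : ∀ n, ∃ κ, ∀ k ≥ κ, (Xs n)ᶜ ∈ G k := by
    intro n
    have hc : (Xs n)ᶜ ∈ contourSeq F := mem_contourSeq.mpr ⟨n+1, fun m hm =>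
      mem_of_superset (hXmem m) (subset_compl_iff_disjoint_right.mpr (hXdisj (by omega)))⟩
    rw [h] at hc
    exact mem_contourSeq.mp hc
  choose κ hκ using hXc
  have hYc : ∀ k, ∃ μ, ∀ n ≥ μ, (Ys k)ᶜ ∈ F n := by
    intro k
    have hc : (Ys k)ᶜ ∈ contourSeq G := mem_contourSeq.mpr ⟨k+1, fun m hm =>
      mem_of_superset (hYmem m) (subset_compl_iff_disjoint_right.mpr (hYdisj (by omega)))⟩
    rw [← h] at hc
    exact mem_contourSeq.mp hc
  choose μ hμ using hYc
  have hΔfin : ∀ n, {k | Mesh (F n) (G k)}.Finite := by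
    intro n
    refine (finite_Iio (κ n)).subset fun k hk => ?_
    simp only [mem_setOf_eq] at hk
    by_contra hge
    simp only [mem_Iio, not_lt] at hge
    obtain ⟨x, hx1, hx2⟩ := hk (Xs n) (hXmem n) ((Xs n)ᶜ) (hκ n k hge)
    exact hx2 hx1
  set Bad := {n | ¬ F n ≤ ⨆ k ∈ {k | Mesh (F n) (G k)}, F n ⊓ G k} with hBadDef
  by_contra hbad
  have hinf : Bad.Infinite := hbad
  -- witnesses A n
  have hAex : ∀ n, ∃ A : Set X, n ∈ Bad →
      (∀ k, Mesh (F n) (G k) → A ∈ F n ⊓ G k) ∧ A ∉ F n := by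
    intro n
    by_cases hn : n ∈ Bad
    · have hn' : ¬ F n ≤ ⨆ k ∈ {k | Mesh (F n) (G k)}, F n ⊓ G k := hn
      rw [Filter.le_def] at hn'
      push_neg at hn'
      obtain ⟨A, hA1, hA2⟩ := hn'
      exact ⟨A, fun _ => ⟨fun k hk => (Filter.mem_iSup.mp (Filter.mem_iSup.mp hA1 k)) hk, hA2⟩⟩
    · exact ⟨∅, fun hmem => absurd hmem hn⟩
  choose A hA using hAex
  have hSTex : ∀ n k, ∃ S T : Set X, S ∈ F n ∧ T ∈ G k ∧
      (n ∈ Bad → Mesh (F n) (G k) → S ∩ T ⊆ A n) := by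
    intro n k
    by_cases hnk : n ∈ Bad ∧ Mesh (F n) (G k)
    · obtain ⟨S, hS, T, hT, hST⟩ := Filter.mem_inf_iff.mp ((hA n hnk.1).1 k hnk.2)
      exact ⟨S, T, hS, hT, fun _ _ => by rw [← hST]⟩
    · exact ⟨Set.univ, Set.univ, univ_mem, univ_mem, fun hb hm => absurd ⟨hb, hm⟩ hnk⟩
  choose S T hS hT hSTsub using hSTex
  have hPQex : ∀ n k, ∃ P Q : Set X, P ∈ F n ∧ Q ∈ G k ∧
      (¬ Mesh (F n) (G k) → P ∩ Q = ∅) := by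
    intro n k
    by_cases hm : Mesh (F n) (G k)
    · exact ⟨Set.univ, Set.univ, univ_mem, univ_mem, fun hn => absurd hm hn⟩
    · have hm' := hm
      rw [Mesh] at hm'
      push_neg at hm'
      obtain ⟨P, hP, Q, hQ, hPQ⟩ := hm'
      exact ⟨P, Q, hP, hQ, fun _ => hPQ⟩
  choose P Q hP hQ hPQe using hPQex
  set R : ℕ → Set X := fun n =>
    (Xs n ∩ ⋂ k ∈ {k | Mesh (F n) (G k)}, S n k) ∩
    ((⋂ k ∈ Iio (max (n+1) (κ n)), P n k) ∩ ⋂ k ∈ {k | k ≤ n ∧ μ k ≤ n}, (Ys k)ᶜ) with hRdef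
  have hRmem : ∀ n, R n ∈ F n := by
    intro n
    refine inter_mem (inter_mem (hXmem n) ?_) (inter_mem ?_ ?_)
    · exact (Filter.biInter_mem (hΔfin n)).mpr fun k _ => hS n k
    · exact (Filter.biInter_mem (finite_Iio _)).mpr fun k _ => hP n k
    · exact (Filter.biInter_mem ((finite_Iic n).subset fun k hk => hk.1)).mpr
        fun k hk => hμ k n hk.2
  set T' : ℕ → Set X := fun k =>
    (Ys k ∩ ⋂ n ∈ {n | Mesh (F n) (G k)}, T n k) ∩
    ((⋂ n ∈ Iio (max (k+1) (μ k)), Q n k) ∩ ⋂ n ∈ {n | n ≤ k ∧ κ n ≤ k}, (Xs n)ᶜ) with hT'def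
  have hΔ'fin : ∀ k, {n | Mesh (F n) (G k)}.Finite := by
    intro k
    refine (finite_Iio (μ k)).subset fun n hn => ?_
    simp only [mem_setOf_eq] at hn
    by_contra hge
    simp only [mem_Iio, not_lt] at hge
    obtain ⟨x, hx1, hx2⟩ := hn ((Ys k)ᶜ) (hμ k n hge) (Ys k) (hYmem k)
    exact hx1 hx2
  have hT'mem : ∀ k, T' k ∈ G k := by
    intro k
    refine inter_mem (inter_mem (hYmem k) ?_) (inter_mem ?_ ?_)
    · exact (Filter.biInter_mem (hΔ'fin k)).mpr fun n _ => hT n k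
    · exact (Filter.biInter_mem (finite_Iio _)).mpr fun n _ => hQ n k
    · exact (Filter.biInter_mem ((finite_Iic k).subset fun n hn => hn.1)).mpr
        fun n hn => hκ n k hn.2
  have hB : (⋃ k, T' k) ∈ contourSeq F := by
    rw [h]
    exact mem_contourSeq.mpr ⟨0, fun k _ => mem_of_superset (hT'mem k) (subset_iUnion T' k)⟩
  obtain ⟨M, hM⟩ := mem_contourSeq.mp hB
  obtain ⟨n, hnBad, hnM⟩ := hinf.exists_gt M
  have hCF : (⋃ k, T' k) ∩ R n ∈ F n := inter_mem (hM n hnM.le) (hRmem n)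
  have hnsub : ¬ ((⋃ k, T' k) ∩ R n ⊆ A n) := fun hsub => (hA n hnBad).2 (mem_of_superset hCF hsub)
  obtain ⟨x, hxC, hxA⟩ := not_subset.mp hnsub
  obtain ⟨hxB, hxR⟩ := hxC
  obtain ⟨k, hxT⟩ := mem_iUnion.mp hxB
  obtain ⟨⟨hxXn, hxS⟩, hxP, hxY⟩ := hxR
  obtain ⟨⟨hxYk, hxTT⟩, hxQ, hxXc⟩ := hxT
  by_cases hm : Mesh (F n) (G k)
  · exact hxA (hSTsub n k hnBad hm ⟨mem_iInter₂.mp hxS k hm, mem_iInter₂.mp hxTT n hm⟩)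
  · have hcontra : x ∈ P n k ∩ Q n k → False := fun hx => by
      rw [hPQe n k hm] at hx
      exact absurd hx (Set.notMem_empty x)
    rcases le_or_gt k n with hkn | hnk
    · rcases le_or_gt (μ k) n with hμn | hnμ
      · exact (mem_iInter₂.mp hxY k ⟨hkn, hμn⟩) hxYk
      · exact hcontra ⟨mem_iInter₂.mp hxP k (mem_Iio.mpr (lt_of_le_of_lt hkn
            (lt_of_lt_of_le (Nat.lt_succ_self n) (le_max_left _ _)))),
          mem_iInter₂.mp hxQ n (mem_Iio.mpr (lt_of_lt_of_le hnμ (le_max_right _ _)))⟩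
    · rcases le_or_gt (κ n) k with hκk | hkκ
      · exact (mem_iInter₂.mp hxXc n ⟨hnk.le, hκk⟩) hxXn
      · exact hcontra ⟨mem_iInter₂.mp hxP k (mem_Iio.mpr (lt_of_lt_of_le hkκ (le_max_right _ _))),
          mem_iInter₂.mp hxQ n (mem_Iio.mpr (lt_of_lt_of_le (Nat.lt_succ_of_lt hnk)
            (le_max_left _ _)))⟩

theorem common_locally_finite_refinement {X : Type*} (F G : ℕ → Filter X)
    (hF : TotallyDisjoint F) (hG : TotallyDisjoint G)
    (h : contourSeq F = contourSeq G) :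
    ∃ (H : ℕ → Filter X) (f g : ℕ → ℕ),
      (∀ n, (f ⁻¹' {n}).Finite) ∧ (∀ n, (g ⁻¹' {n}).Finite) ∧
      {n | F n ≠ ⨆ p ∈ f ⁻¹' {n}, H p}.Finite ∧
      {k | G k ≠ ⨆ p ∈ g ⁻¹' {k}, H p}.Finite ∧
      contourSeq H = contourSeq F := by
  classical
  set e : ℕ ≃ ℕ × ℕ := (Denumerable.eqv (ℕ × ℕ)).symm with he
  set H : ℕ → Filter X := fun p =>
    if Mesh (F (e p).1) (G (e p).2) then F (e p).1 ⊓ G (e p).2 else ⊥ with hHdef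
  set f : ℕ → ℕ := fun p => if Mesh (F (e p).1) (G (e p).2) then (e p).1 else p with hfdef
  set g : ℕ → ℕ := fun p => if Mesh (F (e p).1) (G (e p).2) then (e p).2 else p with hgdef
  have hΔfin : ∀ n, {k | Mesh (F n) (G k)}.Finite := meshFinite F G hF h
  have hΔ'fin : ∀ k, {n | Mesh (F n) (G k)}.Finite := fun k =>
    (meshFinite G F hG h.symm k).subset fun n hn => mesh_comm.mp hn
  have hbound : ∀ s : Set ℕ, s.Finite → ∃ M, ∀ p ≥ M, p ∉ s := by
    intro s hs
    obtain ⟨M, hM⟩ := hs.bddAbove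
    exact ⟨M + 1, fun p hp hmem => by have := hM hmem; omega⟩
  -- value of H at coded pairs
  have hHval : ∀ n k, Mesh (F n) (G k) → H (e.symm (n, k)) = F n ⊓ G k := by
    intro n k hk
    rw [hHdef]
    simp only [Equiv.apply_symm_apply]
    rw [if_pos hk]
  have hfval : ∀ n k, Mesh (F n) (G k) → f (e.symm (n, k)) = n := by
    intro n k hk
    rw [hfdef]
    simp only [Equiv.apply_symm_apply]
    rw [if_pos hk]
  have hgval : ∀ n k, Mesh (F n) (G k) → g (e.symm (n, k)) = k := by
    intro n k hk
    rw [hgdef]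
    simp only [Equiv.apply_symm_apply]
    rw [if_pos hk]
  -- fiber descriptions
  have hffin : ∀ n, (f ⁻¹' {n}).Finite := by
    intro n
    have hsub : f ⁻¹' {n} ⊆ insert n (e ⁻¹' ({n} ×ˢ {k | Mesh (F n) (G k)})) := by
      intro p hp
      simp only [mem_preimage, mem_singleton_iff, hfdef] at hp
      by_cases hm : Mesh (F (e p).1) (G (e p).2)
      · rw [if_pos hm] at hp
        refine mem_insert_of_mem _ ?_
        simp only [mem_preimage, Set.mem_prod, mem_singleton_iff, mem_setOf_eq]
        exact ⟨hp, hp ▸ hm⟩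
      · rw [if_neg hm] at hp
        exact hp ▸ mem_insert _ _
    exact (((finite_singleton n).prod (hΔfin n)).preimage e.injective.injOn).insert n |>.subset hsub
  have hgfin : ∀ k, (g ⁻¹' {k}).Finite := by
    intro k
    have hsub : g ⁻¹' {k} ⊆ insert k (e ⁻¹' ({n | Mesh (F n) (G k)} ×ˢ {k})) := by
      intro p hp
      simp only [mem_preimage, mem_singleton_iff, hgdef] at hp
      by_cases hm : Mesh (F (e p).1) (G (e p).2)
      · rw [if_pos hm] at hp
        refine mem_insert_of_mem _ ?_
        simp only [mem_preimage, Set.mem_prod, mem_singleton_iff, mem_setOf_eq]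
        exact ⟨hp ▸ hm, hp⟩
      · rw [if_neg hm] at hp
        exact hp ▸ mem_insert _ _
    exact (((hΔ'fin k).prod (finite_singleton k)).preimage e.injective.injOn).insert k |>.subset hsub
  -- sup computations
  have hsupF : ∀ n, (⨆ p ∈ f ⁻¹' {n}, H p) = ⨆ k ∈ {k | Mesh (F n) (G k)}, F n ⊓ G k := by
    intro n
    apply le_antisymm
    · refine iSup₂_le fun p hp => ?_
      simp only [mem_preimage, mem_singleton_iff, hfdef] at hp
      by_cases hm : Mesh (F (e p).1) (G (e p).2)
      · rw [if_pos hm] at hp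
        have hH1 : H p = F n ⊓ G (e p).2 := by
          rw [hHdef]
          simp only
          rw [if_pos hm, hp]
        rw [hH1]
        exact le_iSup₂_of_le (e p).2 (hp ▸ hm) le_rfl
      · have hH1 : H p = ⊥ := by
          rw [hHdef]
          simp only
          rw [if_neg hm]
        rw [hH1]
        exact bot_le
    · refine iSup₂_le fun k hk => ?_
      have hk' : Mesh (F n) (G k) := hk
      refine le_trans (le_of_eq (hHval n k hk').symm) ?_
      exact le_iSup₂_of_le (e.symm (n, k)) (by simp [hfval n k hk']) le_rfl
  have hsupG : ∀ k, (⨆ p ∈ g ⁻¹' {k}, H p) = ⨆ n ∈ {n | Mesh (F n) (G k)}, F n ⊓ G k := by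
    intro k
    apply le_antisymm
    · refine iSup₂_le fun p hp => ?_
      simp only [mem_preimage, mem_singleton_iff, hgdef] at hp
      by_cases hm : Mesh (F (e p).1) (G (e p).2)
      · rw [if_pos hm] at hp
        have hH1 : H p = F (e p).1 ⊓ G k := by
          rw [hHdef]
          simp only
          rw [if_pos hm, hp]
        rw [hH1]
        exact le_iSup₂_of_le (e p).1 (hp ▸ hm) le_rfl
      · have hH1 : H p = ⊥ := by
          rw [hHdef]
          simp only
          rw [if_neg hm]
        rw [hH1]
        exact bot_le
    · refine iSup₂_le fun n hn => ?_
      have hn' : Mesh (F n) (G k) := hn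
      refine le_trans (le_of_eq (hHval n k hn').symm) ?_
      exact le_iSup₂_of_le (e.symm (n, k)) (by simp [hgval n k hn']) le_rfl
  have hkeyF := key_claim F G hF hG h
  have hkeyG : {k | ¬ G k ≤ ⨆ n ∈ {n | Mesh (F n) (G k)}, F n ⊓ G k}.Finite := by
    refine (key_claim G F hG hF h.symm).subset fun k hk => ?_
    simp only [mem_setOf_eq] at hk ⊢
    intro hle
    apply hk
    refine le_trans hle (le_of_eq (le_antisymm ?_ ?_))
    · exact iSup₂_le fun n hn => le_iSup₂_of_le n (mesh_comm.mp hn) (le_of_eq (inf_comm _ _))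
    · exact iSup₂_le fun n hn => le_iSup₂_of_le n (mesh_comm.mpr hn) (le_of_eq (inf_comm _ _))
  refine ⟨H, f, g, hffin, hgfin, ?_, ?_, ?_⟩
  · refine hkeyF.subset fun n hn => ?_
    simp only [mem_setOf_eq] at hn ⊢
    intro hle
    refine hn ?_
    rw [hsupF n]
    exact le_antisymm hle (iSup₂_le fun k _ => inf_le_left)
  · refine hkeyG.subset fun k hk => ?_
    simp only [mem_setOf_eq] at hk ⊢
    intro hle
    refine hk ?_
    rw [hsupG k]
    exact le_antisymm hle (iSup₂_le fun n _ => inf_le_right)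
  · -- contourSeq H = contourSeq F
    apply Filter.ext
    intro A
    constructor
    · -- H direction → F
      intro hAH
      obtain ⟨P₀, hP₀⟩ := mem_contourSeq.mp hAH
      obtain ⟨M₂, hM₂⟩ := hbound _ hkeyF
      obtain ⟨M₃, hM₃⟩ := hbound ((fun p => (e p).1) '' (Iio P₀)) ((finite_Iio P₀).image _)
      refine mem_contourSeq.mpr ⟨max M₂ M₃, fun n hn => ?_⟩
      have hnk := hM₂ n (le_trans (le_max_left _ _) hn)
      simp only [mem_setOf_eq, not_not] at hnk
      refine Filter.le_def.mp hnk A ?_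
      rw [Filter.mem_iSup]
      intro k
      rw [Filter.mem_iSup]
      intro hk
      have hk' : Mesh (F n) (G k) := hk
      have hpge : P₀ ≤ e.symm (n, k) := by
        by_contra hlt
        push_neg at hlt
        refine hM₃ n (le_trans (le_max_right _ _) hn) ?_
        exact ⟨e.symm (n, k), mem_Iio.mpr hlt, by simp⟩
      have := hP₀ _ hpge
      rwa [hHval n k hk'] at this
    · -- F direction → H
      intro hAF
      have hAG : A ∈ contourSeq G := by rw [← h]; exact hAF
      obtain ⟨M₁, hM₁⟩ := mem_contourSeq.mp hAF
      obtain ⟨K₁, hK₁⟩ := mem_contourSeq.mp hAG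
      obtain ⟨P₀, hP₀⟩ := hbound (e ⁻¹' (Iio M₁ ×ˢ Iio K₁))
        (((finite_Iio M₁).prod (finite_Iio K₁)).preimage e.injective.injOn)
      refine mem_contourSeq.mpr ⟨P₀, fun p hp => ?_⟩
      by_cases hm : Mesh (F (e p).1) (G (e p).2)
      · have hH1 : H p = F (e p).1 ⊓ G (e p).2 := by
          rw [hHdef]
          simp only
          rw [if_pos hm]
        rw [hH1]
        rcases le_or_gt M₁ (e p).1 with h1 | h1
        · exact mem_inf_of_left (hM₁ _ h1)
        · have h2 : K₁ ≤ (e p).2 := by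
            by_contra h2
            push_neg at h2
            refine hP₀ p hp ?_
            simp only [mem_preimage, Set.mem_prod, mem_Iio]
            exact ⟨h1, h2⟩
          exact mem_inf_of_right (hK₁ _ h2)
      · have hH1 : H p = ⊥ := by
          rw [hHdef]
          simp only
          rw [if_neg hm]
        rw [hH1]
        exact trivial
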